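/- For n agents all at distinct positions with x₂ = x₁ + b and xᵢ - b > x₂ + b for i ≥ 3, under the mechanism outputting x₁ + b, agent 2 has cost b + c, but if agent 2 reports x₂' = x₁ - b (making her the leftmost agent), the output becomes x₁ and her true cost is c < b + c; hence the mechanism outputting the right peak of the leftmost agent is not strategyproof. -/

import Mathlib

noncomputable def cost (b c y x : ℝ) : ℝ := c + min |x - b - y| |x + b - y|

/-!
Reporting `x 0 - b` makes agent 2 the leftmost agent, so the output moves from `x 0 + b = x 1`,
which lies at distance `b` from both of her peaks `x 1 ± b`, to `x 0 = x 1 - b`, which is her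
left peak. Her cost therefore drops from `b + c` to `c`.
-/

theorem Finset.inf'_univ_eq_of_forall_le {ι α : Type*} [Fintype ι] [SemilatticeInf α]
    (h : (Finset.univ : Finset ι).Nonempty) (f : ι → α) (i : ι) (hi : ∀ j, f i ≤ f j) :
    Finset.univ.inf' h f = f i :=
  le_antisymm (Finset.inf'_le f (Finset.mem_univ i)) (Finset.le_inf' h f fun j _ => hi j)

theorem cost_at_peak (b c x : ℝ) : cost b c (x - b) x = c := by
  simp [cost, abs_nonneg]

theorem cost_self (b c x : ℝ) : cost b c x x = |b| + c := by
  simp [cost, add_comm]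

theorem Finset.inf'_univ_update_eq_of_le {ι : Type*} [Fintype ι] [DecidableEq ι]
    (h : (Finset.univ : Finset ι).Nonempty) (x : ι → ℝ) (i : ι) {a : ℝ} (ha : ∀ j, a ≤ x j) :
    Finset.univ.inf' h (Function.update x i a) = a := by
  rw [Finset.inf'_univ_eq_of_forall_le h _ i, Function.update_self]
  intro j
  rcases eq_or_ne j i with rfl | hj
  · simp
  · simpa [Function.update_of_ne hj] using ha j

theorem stmt_19_general (b c : ℝ) (hb : 0 < b) (n : ℕ)
    (x : Fin (n + 2) → ℝ)
    (hmin : ∀ i, x 0 ≤ x i)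
    (h2 : x 1 = x 0 + b) :
    -- the mechanism outputting (min report) + b gives agent 2 cost b + c
    Finset.univ.inf' Finset.univ_nonempty x + b = x 0 + b ∧
    cost b c (x 0 + b) (x 1) = b + c ∧
    -- if agent 2 misreports x 0 - b, the output becomes x 0
    Finset.univ.inf' Finset.univ_nonempty (Function.update x 1 (x 0 - b)) + b = x 0 ∧
    cost b c (x 0) (x 1) = c ∧
    cost b c (x 0) (x 1) < cost b c (x 0 + b) (x 1) := by
  have honest_cost : cost b c (x 0 + b) (x 1) = b + c := by
    rw [← h2, cost_self, abs_of_pos hb]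
  have deviation_cost : cost b c (x 0) (x 1) = c := by
    simpa [h2] using cost_at_peak b c (x 1)
  have deviation_output :
      Finset.univ.inf' Finset.univ_nonempty (Function.update x 1 (x 0 - b)) = x 0 - b :=
    Finset.inf'_univ_update_eq_of_le _ x 1 fun j => by linarith [hmin j]
  refine ⟨by rw [Finset.inf'_univ_eq_of_forall_le _ x 0 hmin], honest_cost,
    by rw [deviation_output]; ring, deviation_cost, ?_⟩
  rw [honest_cost, deviation_cost]
  linarith

theorem stmt_19 (b c : ℝ) (hb : 0 < b) (hc : 0 < c) (n : ℕ)
    (x : Fin (n + 2) → ℝ)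
    (hmin : ∀ i, x 0 ≤ x i)
    (h2 : x 1 = x 0 + b)
    (hrest : ∀ i : Fin (n + 2), 2 ≤ (i : ℕ) → x 1 + b < x i - b) :
    -- the mechanism outputting (min report) + b gives agent 2 cost b + c
    Finset.univ.inf' Finset.univ_nonempty x + b = x 0 + b ∧
    cost b c (x 0 + b) (x 1) = b + c ∧
    -- if agent 2 misreports x 0 - b, the output becomes x 0
    Finset.univ.inf' Finset.univ_nonempty (Function.update x 1 (x 0 - b)) + b = x 0 ∧
    cost b c (x 0) (x 1) = c ∧
    cost b c (x 0) (x 1) < cost b c (x 0 + b) (x 1) :=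
  stmt_19_general b c hb n x hmin h2
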